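/- Suppose Assumptions TI, CONT and M0 hold, and P(G=0, R=0) > 0. Then the distribution of the untreated potential outcome for control attritors is identified: for every y in the range of μ₁₀, F_{Y₁(0)|G=0,R=0}(y) = F_{Y₀|G=0,R=0}(F_{Y₀|G=0,R=1}^{-1}(F_{Y₁|G=0,R=1}(y))). (Distributional identification step in the proof of Proposition 2.) -/
import Mathlib


open MeasureTheory ProbabilityTheory

/-- Conditional CDF of `X` given the event `A`: `F_{X|A}(y) = P(X ≤ y | A)`. -/
noncomputable def cCDF {Ω : Type*} [MeasurableSpace Ω] (P : Measure Ω) (A : Set Ω)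
    (X : Ω → ℝ) (y : ℝ) : ℝ :=
  ((P[|A]) {ω | X ω ≤ y}).toReal

/-- Generalized inverse `F⁻¹(q) = inf {y ∈ ℝ : F(y) ≥ q}`. -/
noncomputable def ginv (F : ℝ → ℝ) (q : ℝ) : ℝ :=
  sInf {y : ℝ | q ≤ F y}

/-- Conditional expectation of `X` given the event `A`: `E[X·1_A]/P(A)`. -/
noncomputable def cExp {Ω : Type*} [MeasurableSpace Ω] (P : Measure Ω) (A : Set Ω)
    (X : Ω → ℝ) : ℝ :=
  (∫ ω in A, X ω ∂P) / (P A).toReal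

/-- Conditional probability of `B` given `A`: `P(B|A) = P(B ∩ A)/P(A)`. -/
noncomputable def condProb {Ω : Type*} [MeasurableSpace Ω] (P : Measure Ω)
    (A B : Set Ω) : ℝ :=
  (P (B ∩ A)).toReal / (P A).toReal


section aux
variable {Ω : Type*} [MeasurableSpace Ω] (P : Measure Ω)

lemma cond_congr {A : Set Ω} (hA : MeasurableSet A) {B B' : Set Ω}
    (h : A ∩ B = A ∩ B') : (P[|A]) B = (P[|A]) B' := by
  rw [cond_apply hA, cond_apply hA, h]

lemma cCDF_congr {A : Set Ω} (hA : MeasurableSet A) {X X' : Ω → ℝ} {y y' : ℝ}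
    (h : ∀ ω ∈ A, (X ω ≤ y ↔ X' ω ≤ y')) : cCDF P A X y = cCDF P A X' y' := by
  unfold cCDF
  congr 1
  refine cond_congr P hA ?_
  ext ω; exact ⟨fun ⟨ha, hb⟩ => ⟨ha, (h ω ha).1 hb⟩, fun ⟨ha, hb⟩ => ⟨ha, (h ω ha).2 hb⟩⟩

lemma cCDF_eq_of_map {A : Set Ω} {X X' : Ω → ℝ} (hX : Measurable X) (hX' : Measurable X')
    (h : (P[|A]).map X = (P[|A]).map X') (y : ℝ) : cCDF P A X y = cCDF P A X' y := by
  unfold cCDF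
  have h1 : {ω | X ω ≤ y} = X ⁻¹' Set.Iic y := rfl
  have h2 : {ω | X' ω ≤ y} = X' ⁻¹' Set.Iic y := rfl
  rw [h1, h2, ← Measure.map_apply hX measurableSet_Iic,
    ← Measure.map_apply hX' measurableSet_Iic, h]

end aux

/-- **Distributional identification step in Proposition 2 (control attritors)**: under
Assumptions TI, CONT and M0 and `P(G=0, R=0) > 0`, for every `y` in the range of `μ₁₀`,
`F_{Y₁(0)|G=0,R=0}(y) = F_{Y₀|G=0,R=0}(F_{Y₀|G=0,R=1}⁻¹(F_{Y₁|G=0,R=1}(y)))`. -/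
theorem cic_prop2_dist_control_attritors {Ω : Type*} [MeasurableSpace Ω]
    (P : Measure Ω) [IsProbabilityMeasure P]
    (U₀ U₁ : Ω → ℝ) (G R : Ω → Bool)
    (hU₀ : Measurable U₀) (hU₁ : Measurable U₁)
    (hG : Measurable G) (hR : Measurable R)
    (μ00 μ10 μ11 : ℝ → ℝ)
    -- observed outcomes
    (Y0 Y1 : Ω → ℝ)
    (hY0 : ∀ ω, Y0 ω = μ00 (U₀ ω))
    (hY1 : ∀ ω, Y1 ω = if G ω = true then μ11 (U₁ ω) else μ10 (U₁ ω))
    -- Assumption TI (time invariance)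
    (hTI : ∀ g r : Bool, 0 < P {ω | G ω = g ∧ R ω = r} →
      (P[|{ω | G ω = g ∧ R ω = r}]).map U₀ = (P[|{ω | G ω = g ∧ R ω = r}]).map U₁)
    -- Assumption CONT
    (hCONT : ∀ g : Bool, 0 < P {ω | G ω = g ∧ R ω = true} ∧
      Continuous (cCDF P {ω | G ω = g ∧ R ω = true} U₁) ∧
      StrictMono (cCDF P {ω | G ω = g ∧ R ω = true} U₁))
    -- Assumption M0
    (hμ00c : Continuous μ00) (hμ00 : StrictMono μ00)
    (hμ10c : Continuous μ10) (hμ10 : StrictMono μ10)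
    -- positive probability of control attritors
    (hpos : 0 < P {ω | G ω = false ∧ R ω = false})
    (y : ℝ) (hy : y ∈ Set.range μ10) :
    cCDF P {ω | G ω = false ∧ R ω = false} (fun ω => μ10 (U₁ ω)) y
      = cCDF P {ω | G ω = false ∧ R ω = false} Y0
          (ginv (cCDF P {ω | G ω = false ∧ R ω = true} Y0)
            (cCDF P {ω | G ω = false ∧ R ω = true} Y1 y)) := by
  obtain ⟨u, rfl⟩ := hy
  set A0 : Set Ω := {ω | G ω = false ∧ R ω = false} with hA0def
  set A1 : Set Ω := {ω | G ω = false ∧ R ω = true} with hA1def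
  have hA0 : MeasurableSet A0 := by
    have : A0 = G ⁻¹' {false} ∩ R ⁻¹' {false} := by ext ω; simp [hA0def]
    rw [this]; exact (hG (measurableSet_singleton _)).inter (hR (measurableSet_singleton _))
  have hA1 : MeasurableSet A1 := by
    have : A1 = G ⁻¹' {false} ∩ R ⁻¹' {true} := by ext ω; simp [hA1def]
    rw [this]; exact (hG (measurableSet_singleton _)).inter (hR (measurableSet_singleton _))
  obtain ⟨hpos1, hFc, hFm⟩ := hCONT false
  set F : ℝ → ℝ := cCDF P A1 U₁ with hFdef
  -- TI on A1 : cCDF of U₀ equals F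
  have hTI1 : ∀ s, cCDF P A1 U₀ s = F s :=
    fun s => cCDF_eq_of_map P hU₀ hU₁ (hTI false true hpos1) s
  -- cCDF A1 Y0 at μ00 s equals F s
  have hG1 : ∀ s : ℝ, cCDF P A1 Y0 (μ00 s) = F s := by
    intro s
    rw [← hTI1 s]
    refine cCDF_congr P hA1 fun ω _ => ?_
    rw [hY0 ω]; exact hμ00.le_iff_le
  -- cCDF A1 Y1 at μ10 u equals F u
  have hq : cCDF P A1 Y1 (μ10 u) = F u := by
    refine cCDF_congr P hA1 fun ω hω => ?_
    rw [hY1 ω]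
    rcases hω with ⟨hg, _⟩
    simp [hg, hμ10.le_iff_le]
  set q : ℝ := F u with hqdef
  -- the generalized inverse evaluates to μ00 u
  have hlow : ∀ t, q ≤ cCDF P A1 Y0 t → μ00 u ≤ t := by
    intro t ht
    by_contra hlt
    push_neg at hlt
    -- find u' < u with t < μ00 u'
    have hev : ∀ᶠ x in nhds u, t < μ00 x :=
      (hμ00c.tendsto u).eventually (eventually_gt_nhds hlt)
    have hev' : ∃ u' < u, t < μ00 u' := by
      have := hev.filter_mono (nhdsWithin_le_nhds (s := Set.Iio u))
      obtain ⟨u', h1, h2⟩ := (this.and self_mem_nhdsWithin).exists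
      exact ⟨u', h2, h1⟩
    obtain ⟨u', hu'lt, htu'⟩ := hev'
    -- cCDF A1 Y0 t ≤ F u'
    have hsub : A1 ∩ {ω | Y0 ω ≤ t} ⊆ A1 ∩ {ω | U₀ ω ≤ u'} := by
      rintro ω ⟨ha, hb⟩
      refine ⟨ha, ?_⟩
      simp only [Set.mem_setOf_eq] at hb ⊢
      rw [hY0 ω] at hb
      exact le_of_lt (hμ00.lt_iff_lt.mp (lt_of_le_of_lt hb htu'))
    have hmono : cCDF P A1 Y0 t ≤ cCDF P A1 U₀ u' := by
      unfold cCDF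
      have : IsProbabilityMeasure (P[|A1]) :=
        cond_isProbabilityMeasure (μ := P) hpos1.ne'
      refine ENNReal.toReal_mono (measure_ne_top _ _) ?_
      rw [cond_apply hA1, cond_apply hA1]
      exact mul_le_mul_right (measure_mono hsub) _
    have : cCDF P A1 Y0 t < q := lt_of_le_of_lt (hmono.trans (hTI1 u').le) (hFm hu'lt)
    exact absurd ht (not_le.mpr this)
  have hmem : q ≤ cCDF P A1 Y0 (μ00 u) := by rw [hG1 u]
  have hginv : ginv (cCDF P A1 Y0) q = μ00 u := by
    unfold ginv
    apply le_antisymm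
    · exact csInf_le ⟨μ00 u, fun t ht => hlow t ht⟩ hmem
    · exact le_csInf ⟨μ00 u, hmem⟩ fun t ht => hlow t ht
  rw [hq, hginv]
  -- LHS : cCDF A0 (μ10∘U₁) (μ10 u) = cCDF A0 U₁ u = cCDF A0 U₀ u = cCDF A0 Y0 (μ00 u)
  have h1 : cCDF P A0 (fun ω => μ10 (U₁ ω)) (μ10 u) = cCDF P A0 U₁ u :=
    cCDF_congr P hA0 fun ω _ => hμ10.le_iff_le
  have h2 : cCDF P A0 U₁ u = cCDF P A0 U₀ u :=
    (cCDF_eq_of_map P hU₀ hU₁ (hTI false false hpos) u).symm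
  have h3 : cCDF P A0 U₀ u = cCDF P A0 Y0 (μ00 u) :=
    cCDF_congr P hA0 fun ω _ => by rw [hY0 ω]; exact hμ00.le_iff_le.symm
  rw [h1, h2, h3]
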